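/- arXiv:2107.04094 — 11 statements merged into one kernel-verified Lean document; each statement's English description precedes it below -/
import Mathlib

section
/- Let t₀ ≤ t₁ be real numbers, let α : ℝ → ℝ be locally Lipschitz, strictly increasing with α(0) = 0, and let η : ℝ → ℝ be differentiable on [t₀, t₁]. If η(t₀) ≤ 0 and η'(t) ≤ α(-η(t)) for all t ∈ [t₀, t₁], then η(t) ≤ 0 for all t ∈ [t₀, t₁]. -/
/-- Comparison lemma for extended class-K functions: if `η(t₀) ≤ 0` and
`η'(t) ≤ α(-η(t))` on `[t₀, t₁]` for a locally Lipschitz extended class-K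
function `α`, then `η(t) ≤ 0` on `[t₀, t₁]`. -/
theorem nonpositivity_of_deriv_le_classK
    (t₀ t₁ : ℝ) (ht : t₀ ≤ t₁)
    (α : ℝ → ℝ) (hα_lip : LocallyLipschitz α) (hα_mono : StrictMono α) (hα0 : α 0 = 0)
    (η η' : ℝ → ℝ)
    (hη : ∀ t ∈ Set.Icc t₀ t₁, HasDerivWithinAt η (η' t) (Set.Icc t₀ t₁) t)
    (hinit : η t₀ ≤ 0)
    (hineq : ∀ t ∈ Set.Icc t₀ t₁, η' t ≤ α (-η t)) :
    ∀ t ∈ Set.Icc t₀ t₁, η t ≤ 0 := by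
  have hcont : ContinuousOn η (Set.Icc t₀ t₁) := fun t ht' =>
    (hη t ht').continuousWithinAt
  intro s hs
  by_contra hpos
  push_neg at hpos
  -- the set of times in [t₀, s] where η ≤ 0
  set S : Set ℝ := Set.Icc t₀ s ∩ η ⁻¹' Set.Iic 0 with hS
  have hsub : Set.Icc t₀ s ⊆ Set.Icc t₀ t₁ := Set.Icc_subset_Icc le_rfl hs.2
  have hSclosed : IsClosed S :=
    ContinuousOn.preimage_isClosed_of_isClosed (hcont.mono hsub) isClosed_Icc isClosed_Iic
  have hSne : S.Nonempty := ⟨t₀, ⟨le_rfl, hs.1⟩, hinit⟩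
  have hSbdd : BddAbove S := ⟨s, fun x hx => hx.1.2⟩
  set c := sSup S with hc
  have hcS : c ∈ S := hSclosed.csSup_mem hSne hSbdd
  have hcs : c ≤ s := hcS.1.2
  have hcne : c ≠ s := fun h => absurd (h ▸ hcS.2 : η s ≤ 0) (not_le.2 hpos)
  have hclt : c < s := lt_of_le_of_ne hcs hcne
  -- on (c, s], η is positive
  have hposmid : ∀ t ∈ Set.Ioc c s, 0 < η t := by
    intro t htm
    by_contra h
    push_neg at h
    have : t ∈ S := ⟨⟨hcS.1.1.trans htm.1.le, htm.2⟩, h⟩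
    exact absurd (le_csSup hSbdd this) (not_le.2 htm.1)
  -- η is antitone on [c, s]
  have hanti : AntitoneOn η (Set.Icc c s) := by
    have hsub' : Set.Icc c s ⊆ Set.Icc t₀ t₁ :=
      Set.Icc_subset_Icc hcS.1.1 (hs.2)
    apply antitoneOn_of_hasDerivWithinAt_nonpos (convex_Icc c s)
      (hcont.mono hsub') (f' := η')
    · intro x hx
      rw [interior_Icc] at hx ⊢
      exact ((hη x (hsub' (Set.mem_Icc_of_Ioo hx))).mono
        ((Set.Ioo_subset_Icc_self).trans hsub'))
    · intro x hx
      rw [interior_Icc] at hx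
      have hx' := hsub' (Set.mem_Icc_of_Ioo hx)
      have h1 : η' x ≤ α (-η x) := hineq x hx'
      have h2 : α (-η x) ≤ 0 := by
        rw [← hα0]
        exact (hα_mono.le_iff_le).2 (by linarith [hposmid x ⟨hx.1, hx.2.le⟩])
      linarith
  have := hanti (Set.left_mem_Icc.2 hcs) (Set.right_mem_Icc.2 hcs) hcs
  have h0 : η c ≤ 0 := hcS.2
  linarith
end

section
/- Let t₀ ≤ t₁ be real numbers, let ε₁ > 0, let α : ℝ → ℝ be locally Lipschitz, strictly increasing with α(0) = 0, and let η : ℝ → ℝ be differentiable on [t₀, t₁]. Suppose η(t₀) ≤ 0 and that η'(t) ≤ α(-η(t)) holds at every t ∈ [t₀, t₁] for which η(t) ≥ -ε₁ (no condition is imposed at times where η(t) < -ε₁). Then η(t) ≤ 0 for all t ∈ [t₀, t₁]. -/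
/-- Hysteresis-switched comparison lemma: the decrease condition
`η'(t) ≤ α(-η(t))` is only required at times where `η(t) ≥ -ε₁`. -/
theorem nonpositivity_of_switched_deriv_le_classK
    (t₀ t₁ : ℝ) (ht : t₀ ≤ t₁)
    (ε₁ : ℝ) (hε₁ : 0 < ε₁)
    (α : ℝ → ℝ) (hα_lip : LocallyLipschitz α) (hα_mono : StrictMono α) (hα0 : α 0 = 0)
    (η η' : ℝ → ℝ)
    (hη : ∀ t ∈ Set.Icc t₀ t₁, HasDerivWithinAt η (η' t) (Set.Icc t₀ t₁) t)
    (hinit : η t₀ ≤ 0)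
    (hineq : ∀ t ∈ Set.Icc t₀ t₁, -ε₁ ≤ η t → η' t ≤ α (-η t)) :
    ∀ t ∈ Set.Icc t₀ t₁, η t ≤ 0 := by
  by_contra hcon
  push_neg at hcon
  obtain ⟨c, hc, hcpos⟩ := hcon
  have hcont : ContinuousOn η (Set.Icc t₀ t₁) :=
    fun t htm => (hη t htm).continuousWithinAt
  set S : Set ℝ := Set.Icc t₀ c ∩ η ⁻¹' Set.Iic 0 with hS
  have hsub : Set.Icc t₀ c ⊆ Set.Icc t₀ t₁ :=
    Set.Icc_subset_Icc le_rfl hc.2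
  have hSclosed : IsClosed S :=
    (hcont.mono hsub).preimage_isClosed_of_isClosed isClosed_Icc isClosed_Iic
  have hSne : S.Nonempty := ⟨t₀, ⟨le_rfl, hc.1⟩, hinit⟩
  have hSbdd : BddAbove S := ⟨c, fun x hx => hx.1.2⟩
  set b := sSup S with hb
  have hbS : b ∈ S := hSclosed.csSup_mem hSne hSbdd
  have hbc : b ≤ c := hbS.1.2
  have ht₀b : t₀ ≤ b := hbS.1.1
  have hηb : η b ≤ 0 := hbS.2
  -- On (b, c], η > 0
  have hpos : ∀ t, b < t → t ≤ c → 0 < η t := by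
    intro t hbt htc
    by_contra h
    push_neg at h
    have : t ∈ S := ⟨⟨ht₀b.trans hbt.le, htc⟩, h⟩
    exact absurd (le_csSup hSbdd this) (not_le.mpr hbt)
  have hbcsub : Set.Icc b c ⊆ Set.Icc t₀ t₁ :=
    Set.Icc_subset_Icc ht₀b hc.2
  have hanti : AntitoneOn η (Set.Icc b c) := by
    apply antitoneOn_of_deriv_nonpos (convex_Icc b c) (hcont.mono hbcsub)
    · intro t htm
      rw [interior_Icc] at htm
      have htmem : t ∈ Set.Icc t₀ t₁ := hbcsub ⟨htm.1.le, htm.2.le⟩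
      have hnhds : Set.Icc t₀ t₁ ∈ nhds t :=
        Icc_mem_nhds (lt_of_le_of_lt ht₀b htm.1) (lt_of_lt_of_le htm.2 hc.2)
      exact ((hη t htmem).hasDerivAt hnhds).differentiableAt.differentiableWithinAt
    · intro t htm
      rw [interior_Icc] at htm
      have htmem : t ∈ Set.Icc t₀ t₁ := hbcsub ⟨htm.1.le, htm.2.le⟩
      have hnhds : Set.Icc t₀ t₁ ∈ nhds t :=
        Icc_mem_nhds (lt_of_le_of_lt ht₀b htm.1) (lt_of_lt_of_le htm.2 hc.2)
      have hd : HasDerivAt η (η' t) t := (hη t htmem).hasDerivAt hnhds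
      rw [hd.deriv]
      have hηt : 0 < η t := hpos t htm.1 htm.2.le
      have h1 : η' t ≤ α (-η t) :=
        hineq t htmem (le_trans (by linarith) hηt.le)
      have h2 : α (-η t) ≤ α 0 := hα_mono.monotone (by linarith)
      linarith [hα0 ▸ h2]
  have : η c ≤ η b := hanti ⟨le_rfl, hbc⟩ ⟨hbc, le_rfl⟩ hbc
  linarith
end

section
/- Let E = EuclideanSpace ℝ (Fin n) and F = EuclideanSpace ℝ (Fin m), let p ∈ E, let A : F →L[ℝ] E be a continuous linear map with adjoint A†, let U ⊆ F be a nonempty compact set, let κ ∈ ℝ, and let a ≥ 0, b ≥ 0. Then sup over all (w_u, w_x) with ‖w_u‖ ≤ a and ‖w_x‖ ≤ b of ( inf over u ∈ U of ( κ + ⟪p, A (u + w_u) + w_x⟫ ) ) equals κ + (inf over u ∈ U of ⟪p, A u⟫) + ‖A† p‖·a + ‖p‖·b. -/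
open scoped RealInnerProductSpace

lemma exists_inner_eq_norm_mul {n : ℕ} (v : EuclideanSpace ℝ (Fin n)) (c : ℝ) (hc : 0 ≤ c) :
    ∃ w : EuclideanSpace ℝ (Fin n), ‖w‖ ≤ c ∧ ⟪v, w⟫ = ‖v‖ * c := by
  rcases eq_or_ne v 0 with h | h
  · exact ⟨0, by simpa, by simp [h]⟩
  · have hv : ‖v‖ ≠ 0 := norm_ne_zero_iff.2 h
    refine ⟨(c / ‖v‖) • v, ?_, ?_⟩
    · rw [norm_smul, Real.norm_eq_abs, abs_of_nonneg (div_nonneg hc (norm_nonneg v))]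
      rw [div_mul_cancel₀ _ hv]
    · rw [real_inner_smul_right, real_inner_self_eq_norm_sq]
      field_simp

/-- Decoupling of the sup-inf value of an expression affine in the control
`u ∈ U` and in the norm-bounded disturbances `(w_u, w_x)`. -/
theorem sup_inf_affine_control_disturbance
    (n m : ℕ) (p : EuclideanSpace ℝ (Fin n))
    (A : EuclideanSpace ℝ (Fin m) →L[ℝ] EuclideanSpace ℝ (Fin n))
    (U : Set (EuclideanSpace ℝ (Fin m))) (hUne : U.Nonempty) (hUc : IsCompact U)
    (κ : ℝ) (a b : ℝ) (ha : 0 ≤ a) (hb : 0 ≤ b) :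
    sSup { r : ℝ | ∃ w_u : EuclideanSpace ℝ (Fin m), ∃ w_x : EuclideanSpace ℝ (Fin n),
          ‖w_u‖ ≤ a ∧ ‖w_x‖ ≤ b ∧
          r = sInf { s : ℝ | ∃ u ∈ U, s = κ + ⟪p, A (u + w_u) + w_x⟫ } }
      = κ + sInf { s : ℝ | ∃ u ∈ U, s = ⟪p, A u⟫ } + ‖A.adjoint p‖ * a + ‖p‖ * b := by
  set q := A.adjoint p with hq
  have hg : Continuous fun u : EuclideanSpace ℝ (Fin m) => ⟪p, A u⟫ :=
    continuous_const.inner A.continuous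
  obtain ⟨u₀, hu₀U, hu₀min⟩ := hUc.exists_isMinOn hUne hg.continuousOn
  set I : ℝ := ⟪p, A u₀⟫ with hI
  have hmin : ∀ u ∈ U, I ≤ ⟪p, A u⟫ := fun u hu => hu₀min hu
  have hIinf : sInf { s : ℝ | ∃ u ∈ U, s = ⟪p, A u⟫ } = I := by
    apply le_antisymm
    · exact csInf_le ⟨I, fun s ⟨u, hu, hs⟩ => hs ▸ hmin u hu⟩ ⟨u₀, hu₀U, rfl⟩
    · exact le_csInf ⟨I, u₀, hu₀U, rfl⟩ fun s ⟨u, hu, hs⟩ => hs ▸ hmin u hu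
  -- inner sInf computation for each disturbance pair
  have hexp : ∀ (w_u : EuclideanSpace ℝ (Fin m)) (w_x : EuclideanSpace ℝ (Fin n))
      (u : EuclideanSpace ℝ (Fin m)),
      κ + ⟪p, A (u + w_u) + w_x⟫ = κ + ⟪p, A u⟫ + (⟪q, w_u⟫ + ⟪p, w_x⟫) := by
    intro w_u w_x u
    rw [map_add, inner_add_right, inner_add_right, hq,
      ContinuousLinearMap.adjoint_inner_left]
    ring
  have hinner : ∀ (w_u : EuclideanSpace ℝ (Fin m)) (w_x : EuclideanSpace ℝ (Fin n)),
      sInf { s : ℝ | ∃ u ∈ U, s = κ + ⟪p, A (u + w_u) + w_x⟫ }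
        = κ + I + (⟪q, w_u⟫ + ⟪p, w_x⟫) := by
    intro w_u w_x
    apply le_antisymm
    · refine csInf_le ⟨κ + I + (⟪q, w_u⟫ + ⟪p, w_x⟫), ?_⟩ ⟨u₀, hu₀U, (hexp w_u w_x u₀).symm ▸ rfl⟩
      rintro s ⟨u, hu, hs⟩
      rw [hs, hexp w_u w_x u]
      have := hmin u hu
      linarith
    · refine le_csInf ⟨κ + ⟪p, A (u₀ + w_u) + w_x⟫, u₀, hu₀U, rfl⟩ ?_
      rintro s ⟨u, hu, hs⟩
      rw [hs, hexp w_u w_x u]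
      have := hmin u hu
      linarith
  rw [hIinf]
  -- outer sSup
  obtain ⟨wu, hwu, hwu'⟩ := exists_inner_eq_norm_mul q a ha
  obtain ⟨wx, hwx, hwx'⟩ := exists_inner_eq_norm_mul p b hb
  apply le_antisymm
  · refine csSup_le ⟨κ + I + (⟪q, wu⟫ + ⟪p, wx⟫), wu, wx, hwu, hwx, (hinner wu wx).symm⟩ ?_
    rintro r ⟨w_u, w_x, h1, h2, hr⟩
    rw [hr, hinner w_u w_x]
    have c1 : ⟪q, w_u⟫ ≤ ‖q‖ * a :=
      (real_inner_le_norm q w_u).trans (mul_le_mul_of_nonneg_left h1 (norm_nonneg q))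
    have c2 : ⟪p, w_x⟫ ≤ ‖p‖ * b :=
      (real_inner_le_norm p w_x).trans (mul_le_mul_of_nonneg_left h2 (norm_nonneg p))
    linarith
  · have hmem : κ + I + ‖q‖ * a + ‖p‖ * b ∈
        { r : ℝ | ∃ w_u : EuclideanSpace ℝ (Fin m), ∃ w_x : EuclideanSpace ℝ (Fin n),
          ‖w_u‖ ≤ a ∧ ‖w_x‖ ≤ b ∧
          r = sInf { s : ℝ | ∃ u ∈ U, s = κ + ⟪p, A (u + w_u) + w_x⟫ } } := by
      refine ⟨wu, wx, hwu, hwx, ?_⟩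
      rw [hinner wu wx, hwu', hwx']
      ring
    refine le_csSup ⟨κ + I + ‖q‖ * a + ‖p‖ * b, ?_⟩ hmem
    rintro r ⟨w_u, w_x, h1, h2, hr⟩
    rw [hr, hinner w_u w_x]
    have c1 : ⟪q, w_u⟫ ≤ ‖q‖ * a :=
      (real_inner_le_norm q w_u).trans (mul_le_mul_of_nonneg_left h1 (norm_nonneg q))
    have c2 : ⟪p, w_x⟫ ≤ ‖p‖ * b :=
      (real_inner_le_norm p w_x).trans (mul_le_mul_of_nonneg_left h2 (norm_nonneg p))
    linarith
end

section
/- Let E = EuclideanSpace ℝ (Fin n), F = EuclideanSpace ℝ (Fin m), let f : ℝ × E → E and g : ℝ × E → (F →L[ℝ] E) be arbitrary maps, let w_{u,max} ≥ 0 and w_{x,max} ≥ 0, and let H : ℝ × E → ℝ be continuously differentiable with partial time derivative ∂ₜH(t,x) and spatial gradient ∇H(t,x) ∈ E. Let t₀ ≤ t₁, let u : ℝ → F, w_u : ℝ → F, w_x : ℝ → E with ‖w_u(t)‖ ≤ w_{u,max} and ‖w_x(t)‖ ≤ w_{x,max} for all t ∈ [t₀,t₁], and let x : ℝ → E be differentiable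 on [t₀,t₁] with x'(t) = f(t, x(t)) + g(t, x(t))(u(t) + w_u(t)) + w_x(t). Let α : ℝ → ℝ be locally Lipschitz, strictly increasing with α(0) = 0. Suppose that for all t ∈ [t₀, t₁]: ∂ₜH(t, x(t)) + ⟪∇H(t, x(t)), f(t, x(t)) + g(t, x(t)) u(t)⟫ ≤ α(-H(t, x(t))) - ( ‖(g(t, x(t)))† ∇H(t, x(t))‖ · w_{u,max} + ‖∇H(t, x(t))‖ · w_{x,max} ). If H(t₀, x(t₀)) ≤ 0, then H(t, x(t)) ≤ 0 for all t ∈ [t₀, t₁]. -/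
open scoped RealInnerProductSpace

/-- Robust CBF invariance: along a trajectory of the disturbed control-affine
system `ẋ = f(t,x) + g(t,x)(u + w_u) + w_x`, the RCBF condition on `u` renders
the zero sublevel set of `H` forward invariant. -/
theorem rcbf_forward_invariance
    (n m : ℕ)
    (f : ℝ × EuclideanSpace ℝ (Fin n) → EuclideanSpace ℝ (Fin n))
    (g : ℝ × EuclideanSpace ℝ (Fin n) →
      (EuclideanSpace ℝ (Fin m) →L[ℝ] EuclideanSpace ℝ (Fin n)))
    (wumax wxmax : ℝ) (hwumax : 0 ≤ wumax) (hwxmax : 0 ≤ wxmax)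
    (H : ℝ × EuclideanSpace ℝ (Fin n) → ℝ)
    (Ht : ℝ × EuclideanSpace ℝ (Fin n) → ℝ)
    (Hgrad : ℝ × EuclideanSpace ℝ (Fin n) → EuclideanSpace ℝ (Fin n))
    (hHsmooth : ContDiff ℝ 1 H)
    (hHderiv : ∀ p : ℝ × EuclideanSpace ℝ (Fin n),
      HasFDerivAt H
        (Ht p • ContinuousLinearMap.fst ℝ ℝ (EuclideanSpace ℝ (Fin n)) +
          (innerSL ℝ (Hgrad p)).comp
            (ContinuousLinearMap.snd ℝ ℝ (EuclideanSpace ℝ (Fin n)))) p)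
    (t₀ t₁ : ℝ) (ht01 : t₀ ≤ t₁)
    (u wu : ℝ → EuclideanSpace ℝ (Fin m)) (wx : ℝ → EuclideanSpace ℝ (Fin n))
    (hwub : ∀ t ∈ Set.Icc t₀ t₁, ‖wu t‖ ≤ wumax)
    (hwxb : ∀ t ∈ Set.Icc t₀ t₁, ‖wx t‖ ≤ wxmax)
    (x : ℝ → EuclideanSpace ℝ (Fin n))
    (hx : ∀ t ∈ Set.Icc t₀ t₁,
      HasDerivAt x (f (t, x t) + g (t, x t) (u t + wu t) + wx t) t)
    (α : ℝ → ℝ) (hα_lip : LocallyLipschitz α) (hα_mono : StrictMono α) (hα0 : α 0 = 0)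
    (hrcbf : ∀ t ∈ Set.Icc t₀ t₁,
      Ht (t, x t) + ⟪Hgrad (t, x t), f (t, x t) + g (t, x t) (u t)⟫ ≤
        α (-H (t, x t)) -
          (‖(g (t, x t)).adjoint (Hgrad (t, x t))‖ * wumax +
            ‖Hgrad (t, x t)‖ * wxmax))
    (hinit : H (t₀, x t₀) ≤ 0) :
    ∀ t ∈ Set.Icc t₀ t₁, H (t, x t) ≤ 0 := by
  set h : ℝ → ℝ := fun t => H (t, x t) with hh
  set h' : ℝ → ℝ := fun t =>
    Ht (t, x t) + ⟪Hgrad (t, x t),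
      f (t, x t) + g (t, x t) (u t + wu t) + wx t⟫ with hh'
  have hderiv : ∀ t ∈ Set.Icc t₀ t₁, HasDerivAt h (h' t) t := by
    intro t ht
    have hxy : HasDerivAt (fun s => ((s : ℝ), x s))
        (1, f (t, x t) + g (t, x t) (u t + wu t) + wx t) t :=
      HasDerivAt.prodMk (hasDerivAt_id t) (hx t ht)
    have := (hHderiv (t, x t)).comp_hasDerivAt t hxy
    simp [h', ContinuousLinearMap.add_apply, ContinuousLinearMap.smul_apply,
      ContinuousLinearMap.comp_apply, ContinuousLinearMap.coe_fst',
      ContinuousLinearMap.coe_snd', innerSL_apply_apply, smul_eq_mul] at this ⊢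
    exact this
  have hcont : ContinuousOn h (Set.Icc t₀ t₁) := fun t ht =>
    ((hderiv t ht).continuousAt).continuousWithinAt
  have hkey : ∀ t ∈ Set.Icc t₀ t₁, h' t ≤ α (-(h t)) := by
    intro t ht
    have hsplit : h' t =
        (Ht (t, x t) + ⟪Hgrad (t, x t), f (t, x t) + g (t, x t) (u t)⟫) +
        (⟪Hgrad (t, x t), g (t, x t) (wu t)⟫ + ⟪Hgrad (t, x t), wx t⟫) := by
      simp only [h', map_add, inner_add_right]
      ring
    have h1 : ⟪Hgrad (t, x t), g (t, x t) (wu t)⟫ ≤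
        ‖(g (t, x t)).adjoint (Hgrad (t, x t))‖ * wumax := by
      rw [← ContinuousLinearMap.adjoint_inner_left]
      exact (real_inner_le_norm _ _).trans
        (mul_le_mul_of_nonneg_left (hwub t ht) (norm_nonneg _))
    have h2 : ⟪Hgrad (t, x t), wx t⟫ ≤ ‖Hgrad (t, x t)‖ * wxmax :=
      (real_inner_le_norm _ _).trans
        (mul_le_mul_of_nonneg_left (hwxb t ht) (norm_nonneg _))
    have := hrcbf t ht
    rw [hsplit]
    simp only [h]
    linarith
  -- fencing with constant barriers `y > 0`
  have hle : ∀ t ∈ Set.Icc t₀ t₁, ∀ y : ℝ, 0 < y → h t ≤ y := by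
    intro t ht y hy
    have := image_le_of_deriv_right_lt_deriv_boundary (f := h) (f' := h')
      (a := t₀) (b := t₁) hcont
      (fun s hs => (hderiv s (Set.Ico_subset_Icc_self hs)).hasDerivWithinAt)
      (B := fun _ => y) (B' := fun _ => 0)
      (by simpa [h] using hinit.trans hy.le)
      (fun s => hasDerivAt_const s y)
      (fun s hs hsy => by
        show h' s < (0:ℝ)
        have hsy' : h s = y := hsy
        have h1 : h' s ≤ α (-(h s)) := hkey s (Set.Ico_subset_Icc_self hs)
        have h2 : α (-(h s)) < α 0 := by
          apply hα_mono
          rw [hsy']; linarith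
        rw [hα0] at h2
        linarith)
    exact this ht
  intro t ht
  have : h t ≤ 0 := by
    by_contra hc
    push_neg at hc
    exact absurd (hle t ht (h t / 2) (by linarith)) (by linarith)
  exact this
end

section
/- Let E = EuclideanSpace ℝ (Fin n), F = EuclideanSpace ℝ (Fin m), let f : ℝ × E → E, g : ℝ × E → (F →L[ℝ] E), w_{u,max} ≥ 0, w_{x,max} ≥ 0, and let H : ℝ × E → ℝ be continuously differentiable with partial time derivative ∂ₜH and spatial gradient ∇H(t,x) ∈ E. Let t₀ ≤ t₁, ε₁ > 0, let u : ℝ → F, w_u : ℝ → F, w_x : ℝ → E with ‖w_u(t)‖ ≤ w_{u,max} and ‖w_x(t)‖ ≤ w_{x,max} for all t ∈ [t₀,t₁], and let x : ℝ → E be differentiable on [t₀,t₁] with x'(t) = f(t, x(t)) + g(t, x(t))(u(t) + w_u(t)) + w_x(t). Let α : ℝ → ℝ be locally Lipschitz, strictly increasing with α(0) = 0. Suppose that at every t ∈ [t₀, t₁] for which H(t, x(t)) ≥ -ε₁ (and only at such t), the RCBF condition holds: ∂ₜH(t, x(t)) + ⟪∇H(t, x(t)), f(t, x(t)) + g(t,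 x(t)) u(t)⟫ ≤ α(-H(t, x(t))) - ( ‖(g(t, x(t)))† ∇H(t, x(t))‖ · w_{u,max} + ‖∇H(t, x(t))‖ · w_{x,max} ). If H(t₀, x(t₀)) ≤ 0, then H(t, x(t)) ≤ 0 for all t ∈ [t₀, t₁]. -/
open scoped RealInnerProductSpace

/-- Hysteresis-switched robust CBF invariance: the RCBF condition on `u` need
only hold at times where `H(t, x(t)) ≥ -ε₁`, and the zero sublevel set of `H`
is still rendered forward invariant along the closed-loop trajectory. -/
theorem switched_rcbf_forward_invariance
    (n m : ℕ)
    (f : ℝ × EuclideanSpace ℝ (Fin n) → EuclideanSpace ℝ (Fin n))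
    (g : ℝ × EuclideanSpace ℝ (Fin n) →
      (EuclideanSpace ℝ (Fin m) →L[ℝ] EuclideanSpace ℝ (Fin n)))
    (wumax wxmax : ℝ) (hwumax : 0 ≤ wumax) (hwxmax : 0 ≤ wxmax)
    (H : ℝ × EuclideanSpace ℝ (Fin n) → ℝ)
    (Ht : ℝ × EuclideanSpace ℝ (Fin n) → ℝ)
    (Hgrad : ℝ × EuclideanSpace ℝ (Fin n) → EuclideanSpace ℝ (Fin n))
    (hHsmooth : ContDiff ℝ 1 H)
    (hHderiv : ∀ p : ℝ × EuclideanSpace ℝ (Fin n),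
      HasFDerivAt H
        (Ht p • ContinuousLinearMap.fst ℝ ℝ (EuclideanSpace ℝ (Fin n)) +
          (innerSL ℝ (Hgrad p)).comp
            (ContinuousLinearMap.snd ℝ ℝ (EuclideanSpace ℝ (Fin n)))) p)
    (t₀ t₁ : ℝ) (ht01 : t₀ ≤ t₁)
    (ε₁ : ℝ) (hε₁ : 0 < ε₁)
    (u wu : ℝ → EuclideanSpace ℝ (Fin m)) (wx : ℝ → EuclideanSpace ℝ (Fin n))
    (hwub : ∀ t ∈ Set.Icc t₀ t₁, ‖wu t‖ ≤ wumax)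
    (hwxb : ∀ t ∈ Set.Icc t₀ t₁, ‖wx t‖ ≤ wxmax)
    (x : ℝ → EuclideanSpace ℝ (Fin n))
    (hx : ∀ t ∈ Set.Icc t₀ t₁,
      HasDerivAt x (f (t, x t) + g (t, x t) (u t + wu t) + wx t) t)
    (α : ℝ → ℝ) (hα_lip : LocallyLipschitz α) (hα_mono : StrictMono α) (hα0 : α 0 = 0)
    (hrcbf : ∀ t ∈ Set.Icc t₀ t₁, -ε₁ ≤ H (t, x t) →
      Ht (t, x t) + ⟪Hgrad (t, x t), f (t, x t) + g (t, x t) (u t)⟫ ≤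
        α (-H (t, x t)) -
          (‖(g (t, x t)).adjoint (Hgrad (t, x t))‖ * wumax +
            ‖Hgrad (t, x t)‖ * wxmax))
    (hinit : H (t₀, x t₀) ≤ 0) :
    ∀ t ∈ Set.Icc t₀ t₁, H (t, x t) ≤ 0 := by

  -- abbreviations
  set h : ℝ → ℝ := fun t => H (t, x t) with hhdef
  set v : ℝ → EuclideanSpace ℝ (Fin n) :=
    fun t => f (t, x t) + g (t, x t) (u t + wu t) + wx t with hvdef
  -- derivative of h along the trajectory
  have hderiv : ∀ t ∈ Set.Icc t₀ t₁,
      HasDerivAt h (Ht (t, x t) + ⟪Hgrad (t, x t), v t⟫) t := by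
    intro t ht
    have hγ : HasDerivAt (fun t => ((t, x t) : ℝ × EuclideanSpace ℝ (Fin n))) (1, v t) t :=
      HasDerivAt.prodMk (hasDerivAt_id t) (hx t ht)
    have := (hHderiv (t, x t)).comp_hasDerivAt t hγ
    simp at this
    exact this
  have hcont : ContinuousOn h (Set.Icc t₀ t₁) :=
    fun t ht => (hderiv t ht).continuousAt.continuousWithinAt
  -- local Lipschitz constant of α near 0
  obtain ⟨K, U, hU, hKlip⟩ := hα_lip 0
  obtain ⟨δ, hδpos, hδU⟩ := Metric.mem_nhds_iff.1 hU
  set δ' : ℝ := δ / 2 with hδ'def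
  have hδ'pos : 0 < δ' := by positivity
  have hαK : ∀ y : ℝ, 0 ≤ y → y ≤ δ' → α (-y) ≤ (K : ℝ) * y := by
    intro y hy0 hyδ
    have hmem : -y ∈ U := by
      apply hδU
      simp only [Metric.mem_ball, Real.dist_eq, sub_zero, abs_neg, abs_of_nonneg hy0]
      linarith
    have h0mem : (0 : ℝ) ∈ U := by
      apply hδU; simp [Metric.mem_ball, hδpos]
    have := (hKlip.dist_le_mul (-y) hmem 0 h0mem)
    rw [Real.dist_eq, Real.dist_eq] at this
    have h1 : α (-y) - α 0 ≤ |α (-y) - α 0| := le_abs_self _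
    rw [hα0] at this h1
    simp only [sub_zero] at this h1
    have h2 : |(-y : ℝ)| = y := by rw [abs_neg, abs_of_nonneg hy0]
    rw [h2] at this
    linarith
  -- differential inequality where the constraint is active
  have hineq : ∀ t ∈ Set.Icc t₀ t₁, -ε₁ ≤ h t →
      Ht (t, x t) + ⟪Hgrad (t, x t), v t⟫ ≤ α (-h t) := by
    intro t ht hact
    have hr := hrcbf t ht hact
    have hsplit : ⟪Hgrad (t, x t), v t⟫ =
        ⟪Hgrad (t, x t), f (t, x t) + g (t, x t) (u t)⟫
          + ⟪Hgrad (t, x t), g (t, x t) (wu t)⟫ + ⟪Hgrad (t, x t), wx t⟫ := by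
      simp only [hvdef, map_add, inner_add_right]
      ring
    have hb1 : ⟪Hgrad (t, x t), g (t, x t) (wu t)⟫ ≤
        ‖(g (t, x t)).adjoint (Hgrad (t, x t))‖ * wumax := by
      have he : ⟪Hgrad (t, x t), g (t, x t) (wu t)⟫ =
          ⟪(g (t, x t)).adjoint (Hgrad (t, x t)), wu t⟫ :=
        (ContinuousLinearMap.adjoint_inner_left _ _ _).symm
      rw [he]
      calc ⟪(g (t, x t)).adjoint (Hgrad (t, x t)), wu t⟫
          ≤ ‖(g (t, x t)).adjoint (Hgrad (t, x t))‖ * ‖wu t‖ := real_inner_le_norm _ _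
        _ ≤ ‖(g (t, x t)).adjoint (Hgrad (t, x t))‖ * wumax := by
            exact mul_le_mul_of_nonneg_left (hwub t ht) (norm_nonneg _)
    have hb2 : ⟪Hgrad (t, x t), wx t⟫ ≤ ‖Hgrad (t, x t)‖ * wxmax := by
      calc ⟪Hgrad (t, x t), wx t⟫ ≤ ‖Hgrad (t, x t)‖ * ‖wx t‖ := real_inner_le_norm _ _
        _ ≤ ‖Hgrad (t, x t)‖ * wxmax :=
            mul_le_mul_of_nonneg_left (hwxb t ht) (norm_nonneg _)
    rw [hsplit]
    have : h t = H (t, x t) := rfl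
    linarith
  -- suppose the conclusion fails
  by_contra hcontra
  push_neg at hcontra
  obtain ⟨s, hs, hhs⟩ := hcontra
  -- last time before s at which h ≤ 0
  set S : Set ℝ := {t ∈ Set.Icc t₀ s | h t ≤ 0} with hSdef
  have hScomp : IsCompact S := by
    have hclosed : IsClosed S := by
      have : S = Set.Icc t₀ s ∩ h ⁻¹' Set.Iic 0 := by
        ext t; simp [hSdef, Set.mem_sep_iff]
      rw [this]
      exact (hcont.mono (Set.Icc_subset_Icc_right hs.2)).preimage_isClosed_of_isClosed
        isClosed_Icc isClosed_Iic
    exact isCompact_Icc.of_isClosed_subset hclosed (fun t ht => ht.1)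
  have hSne : S.Nonempty := ⟨t₀, ⟨le_refl _, hs.1⟩, hinit⟩
  set c : ℝ := sSup S with hcdef
  have hcS : c ∈ S := hScomp.sSup_mem hSne
  have hc01 : c ∈ Set.Icc t₀ t₁ := ⟨hcS.1.1, le_trans hcS.1.2 hs.2⟩
  have hcs : c ≤ s := hcS.1.2
  have hpos : ∀ t, c < t → t ≤ s → 0 < h t := by
    intro t hct hts
    by_contra hle
    push_neg at hle
    have : t ∈ S := ⟨⟨le_trans hcS.1.1 hct.le, hts⟩, hle⟩
    exact absurd (le_csSup hScomp.bddAbove this) (not_le.2 hct)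
  -- key contradiction lemma on an interval [c, s'] where 0 < h ≤ δ' in the interior
  have key : ∀ s' ∈ Set.Icc c s, 0 < h s' →
      (∀ t ∈ Set.Ioo c s', 0 < h t ∧ h t ≤ δ') → False := by
    intro s' hs' hhs' hmid
    have hs'01 : s' ∈ Set.Icc t₀ t₁ := ⟨le_trans hcS.1.1 hs'.1, le_trans hs'.2 hs.2⟩
    have hsub : Set.Icc c s' ⊆ Set.Icc t₀ t₁ :=
      Set.Icc_subset_Icc hc01.1 hs'01.2
    -- ψ t = h t * exp (-K t) is antitone on [c, s']
    set ψ : ℝ → ℝ := fun t => h t * Real.exp (-(K : ℝ) * t) with hψdef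
    have hψderiv : ∀ t ∈ Set.Ioo c s', HasDerivAt ψ
        ((Ht (t, x t) + ⟪Hgrad (t, x t), v t⟫) * Real.exp (-(K : ℝ) * t)
          + h t * (Real.exp (-(K : ℝ) * t) * (-(K : ℝ)))) t := by
      intro t ht
      have h1 : HasDerivAt (fun t : ℝ => -(K : ℝ) * t) (-(K : ℝ)) t := by
        simpa using (hasDerivAt_id t).const_mul (-(K : ℝ))
      have h2 : HasDerivAt (fun t : ℝ => Real.exp (-(K : ℝ) * t))
          (Real.exp (-(K : ℝ) * t) * (-(K : ℝ))) t := (Real.hasDerivAt_exp _).comp t h1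
      exact (hderiv t (hsub (Set.Ioo_subset_Icc_self ht))).mul h2
    have hψanti : AntitoneOn ψ (Set.Icc c s') := by
      apply antitoneOn_of_deriv_nonpos (convex_Icc c s')
      · exact ((hcont.mono hsub).mul (Real.continuous_exp.comp
          (continuous_const.mul continuous_id)).continuousOn)
      · intro t ht
        rw [interior_Icc] at ht
        exact (hψderiv t ht).differentiableAt.differentiableWithinAt
      · intro t ht
        rw [interior_Icc] at ht
        rw [(hψderiv t ht).deriv]
        obtain ⟨hht0, hhtδ⟩ := hmid t ht
        have ht01 : t ∈ Set.Icc t₀ t₁ := hsub (Set.Ioo_subset_Icc_self ht)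
        have hact : -ε₁ ≤ h t := by linarith
        have hle : Ht (t, x t) + ⟪Hgrad (t, x t), v t⟫ ≤ (K : ℝ) * h t :=
          le_trans (hineq t ht01 hact) (hαK (h t) hht0.le hhtδ)
        have hexp : 0 < Real.exp (-(K : ℝ) * t) := Real.exp_pos _
        nlinarith
    have h1 : ψ s' ≤ ψ c := hψanti ⟨le_refl c, hs'.1⟩ ⟨hs'.1, le_refl s'⟩ hs'.1
    have hψc : ψ c ≤ 0 := mul_nonpos_of_nonpos_of_nonneg hcS.2 (Real.exp_pos _).le
    have hψs' : 0 < ψ s' := mul_pos hhs' (Real.exp_pos _)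
    linarith
  -- capping: find a suitable s'
  set T : Set ℝ := {t ∈ Set.Icc c s | δ' ≤ h t} with hTdef
  by_cases hT : T.Nonempty
  · have hTcomp : IsCompact T := by
      have hclosed : IsClosed T := by
        have : T = Set.Icc c s ∩ h ⁻¹' Set.Ici δ' := by
          ext t; simp [hTdef, Set.mem_sep_iff]
        rw [this]
        exact (hcont.mono (Set.Icc_subset_Icc hc01.1 hs.2)).preimage_isClosed_of_isClosed
          isClosed_Icc isClosed_Ici
      exact isCompact_Icc.of_isClosed_subset hclosed (fun t ht => ht.1)
    set s' : ℝ := sInf T with hs'def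
    have hs'T : s' ∈ T := hTcomp.sInf_mem hT
    apply key s' hs'T.1 (lt_of_lt_of_le hδ'pos hs'T.2)
    intro t ht
    have htT : t ∉ T := fun htT => absurd (csInf_le hTcomp.bddBelow htT) (not_le.2 ht.2)
    have htcs : t ∈ Set.Icc c s := ⟨ht.1.le, le_trans ht.2.le hs'T.1.2⟩
    have hht : h t < δ' := by
      by_contra hge
      exact htT ⟨htcs, not_lt.1 hge⟩
    exact ⟨hpos t ht.1 htcs.2, hht.le⟩
  · rw [Set.not_nonempty_iff_eq_empty] at hT
    apply key s ⟨hcs, le_refl s⟩ hhs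
    intro t ht
    have htcs : t ∈ Set.Icc c s := Set.Ioo_subset_Icc_self ht
    have : t ∉ T := by rw [hT]; exact Set.notMem_empty t
    have hht : ¬ δ' ≤ h t := fun hge => this ⟨htcs, hge⟩
    exact ⟨hpos t ht.1 ht.2.le, (not_le.1 hht).le⟩
end

section
/- Let t₀ ≤ t₁ be real numbers, let b : ℝ → ℝ be differentiable on [t₀, t₁], and let c : ℝ → ℝ satisfy b'(t) ≤ c(t) for all t ∈ [t₀, t₁]. Suppose b(t₀) ≤ 0 and that c(t) ≤ 0 at every t ∈ [t₀, t₁] for which b(t) ≥ 0. Then b(t) ≤ 0 for all t ∈ [t₀, t₁]. -/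
/-- Nagumo-type scalar invariance lemma: if `b(t₀) ≤ 0`, `b'(t) ≤ c(t)` on
`[t₀, t₁]`, and `c(t) ≤ 0` whenever `b(t) ≥ 0`, then `b(t) ≤ 0` on `[t₀, t₁]`. -/
theorem nonpositivity_of_bound_nonpos_on_boundary
    (t₀ t₁ : ℝ) (ht : t₀ ≤ t₁)
    (b b' c : ℝ → ℝ)
    (hb : ∀ t ∈ Set.Icc t₀ t₁, HasDerivWithinAt b (b' t) (Set.Icc t₀ t₁) t)
    (hbc : ∀ t ∈ Set.Icc t₀ t₁, b' t ≤ c t)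
    (hinit : b t₀ ≤ 0)
    (hc : ∀ t ∈ Set.Icc t₀ t₁, 0 ≤ b t → c t ≤ 0) :
    ∀ t ∈ Set.Icc t₀ t₁, b t ≤ 0 := by
  have hcont : ContinuousOn b (Set.Icc t₀ t₁) :=
    fun x hx => (hb x hx).continuousWithinAt
  intro t htmem
  by_contra hpos
  push_neg at hpos
  set S : Set ℝ := Set.Icc t₀ t ∩ b ⁻¹' Set.Iic 0 with hS
  have hsub : Set.Icc t₀ t ⊆ Set.Icc t₀ t₁ :=
    Set.Icc_subset_Icc le_rfl htmem.2
  have hSne : S.Nonempty := ⟨t₀, ⟨le_rfl, htmem.1⟩, hinit⟩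
  have hSbdd : BddAbove S := ⟨t, fun u hu => hu.1.2⟩
  have hSclosed : IsClosed S := by
    apply ContinuousOn.preimage_isClosed_of_isClosed (hcont.mono hsub)
      isClosed_Icc isClosed_Iic
  set s := sSup S with hs
  have hsmem : s ∈ S := hSclosed.csSup_mem hSne hSbdd
  have hst : s ≤ t := csSup_le hSne fun u hu => hu.1.2
  have hbs : b s ≤ 0 := hsmem.2
  have hspos : ∀ u ∈ Set.Ioc s t, 0 ≤ b u := by
    intro u hu
    by_contra h
    push_neg at h
    have : u ∈ S := ⟨⟨hsmem.1.1.trans hu.1.le, hu.2⟩, h.le⟩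
    exact absurd (le_csSup hSbdd this) (not_le.mpr hu.1)
  have hslt : s < t := hst.lt_of_ne fun h => absurd hbs (by rw [h]; exact not_le.mpr hpos)
  -- b is antitone on [s, t]
  have hanti : AntitoneOn b (Set.Icc s t) := by
    have hsub2 : Set.Icc s t ⊆ Set.Icc t₀ t₁ :=
      Set.Icc_subset_Icc hsmem.1.1 htmem.2
    have key : ∀ x ∈ interior (Set.Icc s t), HasDerivAt b (b' x) x := by
      intro x hx
      rw [interior_Icc] at hx
      have hx1 : x ∈ Set.Icc t₀ t₁ := hsub2 ⟨hx.1.le, hx.2.le⟩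
      have hx2 : x ∈ Set.Ioo t₀ t₁ :=
        ⟨lt_of_le_of_lt hsmem.1.1 hx.1, lt_of_lt_of_le hx.2 htmem.2⟩
      exact (hb x hx1).hasDerivAt (Icc_mem_nhds hx2.1 hx2.2)
    apply antitoneOn_of_deriv_nonpos (convex_Icc s t) (hcont.mono hsub2)
    · exact fun x hx => ((key x hx).differentiableAt).differentiableWithinAt
    · intro x hx
      rw [(key x hx).deriv]
      rw [interior_Icc] at hx
      have hx1 : x ∈ Set.Icc t₀ t₁ := hsub2 ⟨hx.1.le, hx.2.le⟩
      exact (hbc x hx1).trans (hc x hx1 (hspos x ⟨hx.1, hx.2.le⟩))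
  have : b t ≤ b s :=
    hanti ⟨le_rfl, hst⟩ ⟨hst, le_rfl⟩ hst
  linarith
end

section
/- Let a > 0, let t₀ ≤ t₁ be real numbers, and let b, c : ℝ → ℝ be differentiable on [t₀, t₁] with b'(t) ≤ c(t) for all t ∈ [t₀, t₁]. Define H(t) = b(t) + c(t)·|c(t)| / (2a). Let α : ℝ → ℝ be locally Lipschitz, strictly increasing with α(0) = 0. If b(t₀) ≤ 0, H(t₀) ≤ 0, and the derivative of H satisfies H'(t) ≤ α(-H(t)) for all t ∈ [t₀, t₁], then H(t) ≤ 0 and b(t) ≤ 0 for all t ∈ [t₀, t₁]. -/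
lemma mulAbs_hasDerivAt (x : ℝ) : HasDerivAt (fun y : ℝ => y * |y|) (2 * |x|) x := by
  rcases lt_trichotomy x 0 with hx | hx | hx
  · have h1 : HasDerivAt (fun y : ℝ => -(y ^ 2)) (2 * |x|) x := by
      convert (hasDerivAt_pow 2 x).neg using 1
      · rfl
      · rfl
      · rfl
      rw [abs_of_neg hx]; ring
    refine h1.congr_of_eventuallyEq ?_
    filter_upwards [Iio_mem_nhds hx] with y hy
    rw [abs_of_neg hy]; ring
  · subst hx
    rw [hasDerivAt_iff_tendsto_slope]
    have habs : Filter.Tendsto (fun y : ℝ => |y|) (nhdsWithin (0:ℝ) {(0:ℝ)}ᶜ) (nhds (2 * |(0:ℝ)|)) := by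
      simpa using (continuous_abs.tendsto (0:ℝ)).mono_left (nhdsWithin_le_nhds (s := {(0:ℝ)}ᶜ))
    refine habs.congr' ?_
    filter_upwards [self_mem_nhdsWithin] with y hy
    simp only [Set.mem_compl_iff, Set.mem_singleton_iff] at hy
    rw [slope_def_field]
    field_simp
    simp
  · have h1 : HasDerivAt (fun y : ℝ => y ^ 2) (2 * |x|) x := by
      convert hasDerivAt_pow 2 x using 1
      · rfl
      rw [abs_of_pos hx]; ring
    refine h1.congr_of_eventuallyEq ?_
    filter_upwards [Ioi_mem_nhds hx] with y hy
    rw [abs_of_pos hy]; ring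

lemma barrier {t₀ t₁ : ℝ} (f f' : ℝ → ℝ)
    (hf : ∀ t ∈ Set.Icc t₀ t₁, HasDerivAt f (f' t) t)
    (h0 : f t₀ ≤ 0)
    (hd : ∀ t ∈ Set.Icc t₀ t₁, 0 < f t → f' t ≤ 0) :
    ∀ t ∈ Set.Icc t₀ t₁, f t ≤ 0 := by
  intro tstar hts
  by_contra hpos
  push_neg at hpos
  have hcont : ContinuousOn f (Set.Icc t₀ t₁) :=
    fun t ht => (hf t ht).continuousAt.continuousWithinAt
  set S : Set ℝ := {t | t ∈ Set.Icc t₀ tstar ∧ f t ≤ 0} with hS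
  have hsub : Set.Icc t₀ tstar ⊆ Set.Icc t₀ t₁ := Set.Icc_subset_Icc le_rfl hts.2
  have hSne : S.Nonempty := ⟨t₀, ⟨le_rfl, hts.1⟩, h0⟩
  have hSbdd : BddAbove S := ⟨tstar, fun t ht => ht.1.2⟩
  have hSclosed : IsClosed S := by
    have heq : S = Set.Icc t₀ tstar ∩ f ⁻¹' (Set.Iic 0) := by
      ext t; simp [hS, Set.mem_Icc, and_assoc]
    rw [heq]
    exact ContinuousOn.preimage_isClosed_of_isClosed (hcont.mono hsub) isClosed_Icc isClosed_Iic
  set s := sSup S with hs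
  have hsmem : s ∈ S := hSclosed.csSup_mem hSne hSbdd
  have hst : s ≤ tstar := hsmem.1.2
  have hpos' : ∀ t ∈ Set.Ioc s tstar, 0 < f t := by
    intro t ht
    by_contra h
    push_neg at h
    exact absurd (le_csSup hSbdd ⟨⟨hsmem.1.1.trans ht.1.le, ht.2⟩, h⟩) (not_le.mpr ht.1)
  have hsub2 : Set.Icc s tstar ⊆ Set.Icc t₀ t₁ := Set.Icc_subset_Icc hsmem.1.1 hts.2
  have hanti : AntitoneOn f (Set.Icc s tstar) := by
    apply antitoneOn_of_deriv_nonpos (convex_Icc _ _) (hcont.mono hsub2)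
    · intro t ht
      rw [interior_Icc] at ht
      exact (hf t (hsub2 (Set.mem_Icc_of_Ioo ht))).differentiableAt.differentiableWithinAt
    · intro t ht
      rw [interior_Icc] at ht
      have htm := hsub2 (Set.mem_Icc_of_Ioo ht)
      rw [(hf t htm).deriv]
      exact hd t htm (hpos' t ⟨ht.1, ht.2.le⟩)
  have := hanti (Set.left_mem_Icc.mpr hst) (Set.right_mem_Icc.mpr hst) hst
  linarith [hsmem.2]




/-- Scalar form of the constant-control-authority CBF invariance theorem:
with `H(t) = b(t) + c(t)|c(t)|/(2a)`, if `b' ≤ c`, `b(t₀) ≤ 0`, `H(t₀) ≤ 0`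
and `H'(t) ≤ α(-H(t))`, then both `H` and `b` remain nonpositive. -/
theorem constant_authority_cbf_scalar_invariance
    (a : ℝ) (ha : 0 < a) (t₀ t₁ : ℝ) (ht01 : t₀ ≤ t₁)
    (b b' c c' : ℝ → ℝ)
    (hb : ∀ t ∈ Set.Icc t₀ t₁, HasDerivAt b (b' t) t)
    (hc : ∀ t ∈ Set.Icc t₀ t₁, HasDerivAt c (c' t) t)
    (hbc : ∀ t ∈ Set.Icc t₀ t₁, b' t ≤ c t)
    (α : ℝ → ℝ) (hα_lip : LocallyLipschitz α) (hα_mono : StrictMono α) (hα0 : α 0 = 0)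
    (hb0 : b t₀ ≤ 0)
    (hH0 : b t₀ + c t₀ * |c t₀| / (2 * a) ≤ 0)
    (hHd : ∀ t ∈ Set.Icc t₀ t₁,
      deriv (fun s => b s + c s * |c s| / (2 * a)) t ≤
        α (-(b t + c t * |c t| / (2 * a)))) :
    ∀ t ∈ Set.Icc t₀ t₁, b t + c t * |c t| / (2 * a) ≤ 0 ∧ b t ≤ 0 := by
  set H : ℝ → ℝ := fun s => b s + c s * |c s| / (2 * a) with hHdef
  set H' : ℝ → ℝ := fun s => b' s + 2 * |c s| * c' s / (2 * a) with hH'def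
  have hH : ∀ t ∈ Set.Icc t₀ t₁, HasDerivAt H (H' t) t := by
    intro t ht
    exact (hb t ht).add ((((mulAbs_hasDerivAt (c t)).comp t (hc t ht))).div_const (2 * a))
  have hHle : ∀ t ∈ Set.Icc t₀ t₁, H t ≤ 0 := by
    apply barrier H H' hH hH0
    intro t ht hpos
    have h1 := hHd t ht
    rw [(hH t ht).deriv] at h1
    have h2 : α (-(b t + c t * |c t| / (2 * a))) < α 0 := by
      apply hα_mono
      simp only [hHdef] at hpos
      linarith
    rw [hα0] at h2
    exact le_of_lt (lt_of_le_of_lt h1 h2)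
  have hble : ∀ t ∈ Set.Icc t₀ t₁, b t ≤ 0 := by
    apply barrier b b' hb hb0
    intro t ht hpos
    have hH1 : H t ≤ 0 := hHle t ht
    have h2 : c t * |c t| < 0 := by
      by_contra h
      push_neg at h
      have : 0 < c t * |c t| / (2 * a) + b t := by positivity
      simp only [hHdef] at hH1
      linarith
    have hc0 : c t ≤ 0 := by
      by_contra h
      push_neg at h
      nlinarith [abs_of_pos h]
    linarith [hbc t ht]
  exact fun t ht => ⟨hHle t ht, hble t ht⟩
end

section
/- Let E = EuclideanSpace ℝ (Fin n), F = EuclideanSpace ℝ (Fin m), let f : ℝ × E → E, g : ℝ × E → (F →L[ℝ] E), w_{u,max} ≥ 0, w_{x,max} ≥ 0, and let h : ℝ × E → ℝ be twice continuously differentiable with ⟪∇h(t,x), g(t,x) v⟫ = 0 for all t ∈ ℝ, x ∈ E, v ∈ F (relative degree two). Define ψ(t,x) = ∂ₜh(t,x) + ⟪∇h(t,x), f(t,x)⟫ + w_{x,max}·‖∇h(t,x)‖ and assume ψ is continuously differentiable. Let a_max > 0 and define H(t,x) = h(t,x) + ψ(t,x)·|ψ(t,x)| / (2 a_max). Let t₀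 ≤ t₁, let u : ℝ → F, w_u : ℝ → F, w_x : ℝ → E with ‖w_u(t)‖ ≤ w_{u,max} and ‖w_x(t)‖ ≤ w_{x,max} on [t₀,t₁], and let x : ℝ → E be differentiable on [t₀,t₁] with x'(t) = f(t, x(t)) + g(t, x(t))(u(t) + w_u(t)) + w_x(t). Let α : ℝ → ℝ be locally Lipschitz, strictly increasing with α(0) = 0, and suppose for all t ∈ [t₀, t₁]: ∂ₜH(t, x(t)) + ⟪∇H(t, x(t)), f(t, x(t)) + g(t, x(t)) u(t)⟫ ≤ α(-H(t, x(t))) - ( ‖(g(t, x(t)))† ∇H(t, x(t))‖ · w_{u,max} + ‖∇H(t, x(t))‖ · w_{x,max} ). If H(t₀, x(t₀)) ≤ 0 and h(t₀, x(t₀)) ≤ 0, then H(t, x(t)) ≤ 0 and h(t, x(t)) ≤ 0 for all t ∈ [t₀, t₁]. -/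
open scoped RealInnerProductSpace

private lemma aux_nonpos {t₀ t₁ : ℝ} {φ φ' : ℝ → ℝ}
    (hderiv : ∀ t ∈ Set.Icc t₀ t₁, HasDerivAt φ (φ' t) t)
    (h0 : φ t₀ ≤ 0)
    (hkey : ∀ t ∈ Set.Icc t₀ t₁, 0 ≤ φ t → φ' t ≤ 0) :
    ∀ t ∈ Set.Icc t₀ t₁, φ t ≤ 0 := by
  intro tstar htstar
  by_contra hpos
  push_neg at hpos
  have hsub : Set.Icc t₀ tstar ⊆ Set.Icc t₀ t₁ := Set.Icc_subset_Icc le_rfl htstar.2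
  have hcont : ContinuousOn φ (Set.Icc t₀ tstar) := fun t ht =>
    ((hderiv t (hsub ht)).continuousAt).continuousWithinAt
  set S := Set.Icc t₀ tstar ∩ φ ⁻¹' Set.Iic 0 with hSdef
  have ht₀S : t₀ ∈ S := ⟨Set.left_mem_Icc.2 htstar.1, h0⟩
  have hne : S.Nonempty := ⟨t₀, ht₀S⟩
  have hbdd : BddAbove S := ⟨tstar, fun t ht => ht.1.2⟩
  have hSclosed : IsClosed S :=
    hcont.preimage_isClosed_of_isClosed isClosed_Icc isClosed_Iic
  set s := sSup S with hs
  have hsS : s ∈ S := hSclosed.csSup_mem hne hbdd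
  have hφs : φ s ≤ 0 := hsS.2
  have hslt : s < tstar := lt_of_le_of_ne hsS.1.2 (fun he => by rw [he] at hφs; linarith)
  have hst₀ : t₀ ≤ s := hsS.1.1
  have hposmid : ∀ t ∈ Set.Ioc s tstar, 0 < φ t := by
    intro t ht
    by_contra hle
    push_neg at hle
    have : t ∈ S := ⟨⟨hst₀.trans ht.1.le, ht.2⟩, hle⟩
    exact absurd (le_csSup hbdd this) (not_le.2 ht.1)
  have hanti : AntitoneOn φ (Set.Icc s tstar) := by
    apply antitoneOn_of_deriv_nonpos (convex_Icc s tstar)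
      (hcont.mono (Set.Icc_subset_Icc hst₀ le_rfl))
    · intro t ht
      rw [interior_Icc] at ht
      exact ((hderiv t (hsub ⟨hst₀.trans ht.1.le, ht.2.le⟩)).differentiableAt).differentiableWithinAt
    · intro t ht
      rw [interior_Icc] at ht
      have htIcc : t ∈ Set.Icc t₀ t₁ := hsub ⟨hst₀.trans ht.1.le, ht.2.le⟩
      rw [(hderiv t htIcc).deriv]
      exact hkey t htIcc (hposmid t ⟨ht.1, ht.2.le⟩).le
  have := hanti (Set.left_mem_Icc.2 hslt.le) (Set.right_mem_Icc.2 hslt.le) hslt.le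
  linarith

/-- Constant-control-authority RCBF: with `ψ = ḣ_w` the disturbance-robust
bound on the rate of the relative-degree-two constraint `h`, and
`H = h + ψ|ψ|/(2 a_max)`, the RCBF condition renders the restricted safe set
`{H ≤ 0 and h ≤ 0}` forward invariant along the closed-loop trajectory. -/
theorem constant_authority_rcbf_forward_invariance
    (n m : ℕ)
    (f : ℝ × EuclideanSpace ℝ (Fin n) → EuclideanSpace ℝ (Fin n))
    (g : ℝ × EuclideanSpace ℝ (Fin n) →
      (EuclideanSpace ℝ (Fin m) →L[ℝ] EuclideanSpace ℝ (Fin n)))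
    (wumax wxmax : ℝ) (hwumax : 0 ≤ wumax) (hwxmax : 0 ≤ wxmax)
    (h : ℝ × EuclideanSpace ℝ (Fin n) → ℝ)
    (ht : ℝ × EuclideanSpace ℝ (Fin n) → ℝ)
    (hgrad : ℝ × EuclideanSpace ℝ (Fin n) → EuclideanSpace ℝ (Fin n))
    (hhsmooth : ContDiff ℝ 2 h)
    (hhderiv : ∀ p : ℝ × EuclideanSpace ℝ (Fin n),
      HasFDerivAt h
        (ht p • ContinuousLinearMap.fst ℝ ℝ (EuclideanSpace ℝ (Fin n)) +
          (innerSL ℝ (hgrad p)).comp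
            (ContinuousLinearMap.snd ℝ ℝ (EuclideanSpace ℝ (Fin n)))) p)
    -- relative degree two: the gradient of h annihilates the range of g
    (hreldeg : ∀ (t : ℝ) (y : EuclideanSpace ℝ (Fin n)) (v : EuclideanSpace ℝ (Fin m)),
      ⟪hgrad (t, y), g (t, y) v⟫ = 0)
    (ψ : ℝ × EuclideanSpace ℝ (Fin n) → ℝ)
    (hψdef : ∀ p : ℝ × EuclideanSpace ℝ (Fin n),
      ψ p = ht p + ⟪hgrad p, f p⟫ + wxmax * ‖hgrad p‖)
    (hψsmooth : ContDiff ℝ 1 ψ)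
    (amax : ℝ) (hamax : 0 < amax)
    (H : ℝ × EuclideanSpace ℝ (Fin n) → ℝ)
    (hHdef : ∀ p : ℝ × EuclideanSpace ℝ (Fin n),
      H p = h p + ψ p * |ψ p| / (2 * amax))
    (Ht : ℝ × EuclideanSpace ℝ (Fin n) → ℝ)
    (Hgrad : ℝ × EuclideanSpace ℝ (Fin n) → EuclideanSpace ℝ (Fin n))
    (hHderiv : ∀ p : ℝ × EuclideanSpace ℝ (Fin n),
      HasFDerivAt H
        (Ht p • ContinuousLinearMap.fst ℝ ℝ (EuclideanSpace ℝ (Fin n)) +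
          (innerSL ℝ (Hgrad p)).comp
            (ContinuousLinearMap.snd ℝ ℝ (EuclideanSpace ℝ (Fin n)))) p)
    (t₀ t₁ : ℝ) (ht01 : t₀ ≤ t₁)
    (u wu : ℝ → EuclideanSpace ℝ (Fin m)) (wx : ℝ → EuclideanSpace ℝ (Fin n))
    (hwub : ∀ t ∈ Set.Icc t₀ t₁, ‖wu t‖ ≤ wumax)
    (hwxb : ∀ t ∈ Set.Icc t₀ t₁, ‖wx t‖ ≤ wxmax)
    (x : ℝ → EuclideanSpace ℝ (Fin n))
    (hx : ∀ t ∈ Set.Icc t₀ t₁,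
      HasDerivAt x (f (t, x t) + g (t, x t) (u t + wu t) + wx t) t)
    (α : ℝ → ℝ) (hα_lip : LocallyLipschitz α) (hα_mono : StrictMono α) (hα0 : α 0 = 0)
    (hrcbf : ∀ t ∈ Set.Icc t₀ t₁,
      Ht (t, x t) + ⟪Hgrad (t, x t), f (t, x t) + g (t, x t) (u t)⟫ ≤
        α (-H (t, x t)) -
          (‖(g (t, x t)).adjoint (Hgrad (t, x t))‖ * wumax +
            ‖Hgrad (t, x t)‖ * wxmax))
    (hH0 : H (t₀, x t₀) ≤ 0) (hh0 : h (t₀, x t₀) ≤ 0) :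
    ∀ t ∈ Set.Icc t₀ t₁, H (t, x t) ≤ 0 ∧ h (t, x t) ≤ 0 := by
  set X : ℝ → EuclideanSpace ℝ (Fin n) :=
    fun t => f (t, x t) + g (t, x t) (u t + wu t) + wx t with hX
  have hxder : ∀ t ∈ Set.Icc t₀ t₁,
      HasDerivAt (fun t => (t, x t)) ((1 : ℝ), X t) t :=
    fun t htm => HasDerivAt.prodMk (hasDerivAt_id t) (hx t htm)
  have happly : ∀ (a : ℝ) (b : EuclideanSpace ℝ (Fin n))
      (v : EuclideanSpace ℝ (Fin n)),
      (a • ContinuousLinearMap.fst ℝ ℝ (EuclideanSpace ℝ (Fin n)) +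
        (innerSL ℝ b).comp
          (ContinuousLinearMap.snd ℝ ℝ (EuclideanSpace ℝ (Fin n)))) ((1 : ℝ), v)
        = a + ⟪b, v⟫ := by
    intro a b v
    simp
  have hHd : ∀ t ∈ Set.Icc t₀ t₁,
      HasDerivAt (fun t => H (t, x t)) (Ht (t, x t) + ⟪Hgrad (t, x t), X t⟫) t := by
    intro t htm
    have := (hHderiv (t, x t)).comp_hasDerivAt t (hxder t htm)
    rwa [happly] at this
  have hhd : ∀ t ∈ Set.Icc t₀ t₁,
      HasDerivAt (fun t => h (t, x t)) (ht (t, x t) + ⟪hgrad (t, x t), X t⟫) t := by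
    intro t htm
    have := (hhderiv (t, x t)).comp_hasDerivAt t (hxder t htm)
    rwa [happly] at this
  -- Step 1 : H ≤ 0 along the trajectory
  have stepH : ∀ t ∈ Set.Icc t₀ t₁, H (t, x t) ≤ 0 := by
    apply aux_nonpos hHd hH0
    intro t htm hHnn
    have hrc := hrcbf t htm
    have hαle : α (-H (t, x t)) ≤ 0 := by
      have := hα_mono.monotone (neg_nonpos.2 hHnn)
      rwa [hα0] at this
    have hXsplit : X t = (f (t, x t) + g (t, x t) (u t)) + g (t, x t) (wu t) + wx t := by
      rw [hX]; simp [map_add]; abel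
    have h1 : ⟪Hgrad (t, x t), g (t, x t) (wu t)⟫ ≤
        ‖(g (t, x t)).adjoint (Hgrad (t, x t))‖ * wumax := by
      rw [← ContinuousLinearMap.adjoint_inner_left]
      calc ⟪(g (t, x t)).adjoint (Hgrad (t, x t)), wu t⟫
          ≤ ‖(g (t, x t)).adjoint (Hgrad (t, x t))‖ * ‖wu t‖ := real_inner_le_norm _ _
        _ ≤ _ := mul_le_mul_of_nonneg_left (hwub t htm) (norm_nonneg _)
    have h2 : ⟪Hgrad (t, x t), wx t⟫ ≤ ‖Hgrad (t, x t)‖ * wxmax :=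
      le_trans (real_inner_le_norm _ _)
        (mul_le_mul_of_nonneg_left (hwxb t htm) (norm_nonneg _))
    have hexp : ⟪Hgrad (t, x t), X t⟫ =
        ⟪Hgrad (t, x t), f (t, x t) + g (t, x t) (u t)⟫ +
        ⟪Hgrad (t, x t), g (t, x t) (wu t)⟫ + ⟪Hgrad (t, x t), wx t⟫ := by
      rw [hXsplit, inner_add_right, inner_add_right]
    rw [hexp]
    linarith
  -- Step 2 : h ≤ 0 along the trajectory
  have steph : ∀ t ∈ Set.Icc t₀ t₁, h (t, x t) ≤ 0 := by
    apply aux_nonpos hhd hh0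
    intro t htm hhnn
    have hHle := stepH t htm
    have hψnonpos : ψ (t, x t) ≤ 0 := by
      have hHd' := hHdef (t, x t)
      have hmul : ψ (t, x t) * |ψ (t, x t)| ≤ 0 := by
        have h2a : (0 : ℝ) < 2 * amax := by linarith
        have h3 : ψ (t, x t) * |ψ (t, x t)| / (2 * amax) ≤ 0 := by linarith
        calc ψ (t, x t) * |ψ (t, x t)|
            = ψ (t, x t) * |ψ (t, x t)| / (2 * amax) * (2 * amax) := by field_simp
          _ ≤ 0 := mul_nonpos_iff.mpr (Or.inr ⟨h3, h2a.le⟩)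
      by_contra hposψ
      push_neg at hposψ
      rw [abs_of_pos hposψ] at hmul
      nlinarith
    have hexp : ⟪hgrad (t, x t), X t⟫ =
        ⟪hgrad (t, x t), f (t, x t)⟫ + ⟪hgrad (t, x t), wx t⟫ := by
      rw [hX]
      rw [inner_add_right, inner_add_right, hreldeg]
      ring
    have h2 : ⟪hgrad (t, x t), wx t⟫ ≤ ‖hgrad (t, x t)‖ * wxmax :=
      le_trans (real_inner_le_norm _ _)
        (mul_le_mul_of_nonneg_left (hwxb t htm) (norm_nonneg _))
    have hψ' := hψdef (t, x t)
    rw [hexp]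
    nlinarith [h2]
  exact fun t htm => ⟨stepH t htm, steph t htm⟩
end

section
/- Let E = EuclideanSpace ℝ (Fin n), F = EuclideanSpace ℝ (Fin m), let f : ℝ × E → E, g : ℝ × E → (F →L[ℝ] E), w_{u,max} ≥ 0, w_{x,max} ≥ 0, and let h : ℝ × E → ℝ be twice continuously differentiable with ⟪∇h(t,x), g(t,x) v⟫ = 0 for all t ∈ ℝ, x ∈ E, v ∈ F (relative degree two). Define ψ(t,x) = ∂ₜh(t,x) + ⟪∇h(t,x), f(t,x)⟫ + w_{x,max}·‖∇h(t,x)‖ and assume ψ is continuously differentiable. Let Φ : ℝ → ℝ be a continuously differentiable bijection whose derivative φ = Φ' satisfies φ(λ) < 0 for all λ ∈ ℝ, and define H(t,x) = Φ⁻¹( Φ(h(t,x)) - ψ(t,x)·|ψ(t,x)| / 2 ). Let t₀ ≤ t₁, let u : ℝ → F, w_u : ℝ → F, w_x : ℝ → E with ‖w_u(t)‖ ≤ w_{u,max} and ‖w_x(t)‖ ≤ w_{x,max} on [t₀,t₁], and let x : ℝ → E be differentiable on [t₀,t₁] with x'(t) = f(t, x(t)) + g(t, x(t))(u(t) + w_u(t))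 + w_x(t). Let α : ℝ → ℝ be locally Lipschitz, strictly increasing with α(0) = 0, and suppose for all t ∈ [t₀, t₁]: ∂ₜH(t, x(t)) + ⟪∇H(t, x(t)), f(t, x(t)) + g(t, x(t)) u(t)⟫ ≤ α(-H(t, x(t))) - ( ‖(g(t, x(t)))† ∇H(t, x(t))‖ · w_{u,max} + ‖∇H(t, x(t))‖ · w_{x,max} ). If H(t₀, x(t₀)) ≤ 0 and h(t₀, x(t₀)) ≤ 0, then H(t, x(t)) ≤ 0 and h(t, x(t)) ≤ 0 for all t ∈ [t₀, t₁]. -/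
open scoped RealInnerProductSpace

lemma nonpos_of_deriv_neg_on_pos (t₀ t₁ : ℝ) (y y' : ℝ → ℝ)
    (hy : ∀ t ∈ Set.Icc t₀ t₁, HasDerivAt y (y' t) t)
    (hneg : ∀ t ∈ Set.Icc t₀ t₁, 0 < y t → y' t < 0)
    (h0 : y t₀ ≤ 0) : ∀ t ∈ Set.Icc t₀ t₁, y t ≤ 0 := by
  intro t htmem
  by_contra hpos
  push_neg at hpos
  obtain ⟨ht0, ht1⟩ := htmem
  have hcont : ∀ s ∈ Set.Icc t₀ t₁, ContinuousAt y s := fun s hs =>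
    (hy s hs).continuousAt
  set S : Set ℝ := {s | s ∈ Set.Icc t₀ t ∧ y s ≤ 0} with hS
  have hSne : S.Nonempty := ⟨t₀, ⟨le_refl _, ht0⟩, h0⟩
  have hSbdd : BddAbove S := ⟨t, fun s hs => hs.1.2⟩
  set σ := sSup S with hσ
  have hσle : σ ≤ t := csSup_le hSne (fun s hs => hs.1.2)
  have hσge : t₀ ≤ σ := le_csSup hSbdd ⟨⟨le_refl _, ht0⟩, h0⟩
  have hσmem : σ ∈ Set.Icc t₀ t₁ := ⟨hσge, le_trans hσle ht1⟩
  have hyσ : y σ ≤ 0 := by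
    by_contra hyσpos
    push_neg at hyσpos
    have hca := hcont σ hσmem
    obtain ⟨δ, hδpos, hδ⟩ := Metric.continuousAt_iff.1 hca (y σ) hyσpos
    have hub : ∀ s ∈ S, s ≤ σ - δ/2 := by
      intro s hs
      by_contra hsle
      push_neg at hsle
      have hsσ : s ≤ σ := le_csSup hSbdd hs
      have : dist s σ < δ := by
        rw [Real.dist_eq, abs_sub_lt_iff]; constructor <;> nlinarith
      have := hδ this
      rw [Real.dist_eq, abs_sub_lt_iff] at this
      have : 0 < y s := by linarith
      linarith [hs.2]
    have : σ ≤ σ - δ/2 := csSup_le hSne hub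
    linarith
  have hσlt : σ < t := lt_of_le_of_ne hσle (fun he => by rw [he] at hyσ; linarith)
  have hypos : ∀ s ∈ Set.Ioc σ t, 0 < y s := by
    intro s hs
    by_contra hsle
    push_neg at hsle
    have : s ∈ S := ⟨⟨le_trans hσge hs.1.le, hs.2⟩, hsle⟩
    have := le_csSup hSbdd this
    linarith [hs.1]
  have hsub : Set.Icc σ t ⊆ Set.Icc t₀ t₁ := Set.Icc_subset_Icc hσge ht1
  have hanti : StrictAntiOn y (Set.Icc σ t) := by
    apply strictAntiOn_of_deriv_neg (convex_Icc σ t)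
    · exact fun s hs => (hcont s (hsub hs)).continuousWithinAt
    · intro s hs
      rw [interior_Icc] at hs
      have hsmem : s ∈ Set.Icc t₀ t₁ := hsub ⟨hs.1.le, hs.2.le⟩
      rw [(hy s hsmem).deriv]
      exact hneg s hsmem (hypos s ⟨hs.1, hs.2.le⟩)
  have := hanti (Set.left_mem_Icc.2 hσlt.le) (Set.right_mem_Icc.2 hσlt.le) hσlt
  linarith


/-- Variable-control-authority RCBF: with `ψ = ḣ_w` the disturbance-robust
bound on the rate of the relative-degree-two constraint `h`, `Φ` a strictly
decreasing `C¹` bijection (antiderivative of the deceleration bound `φ`), and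
`H = Φ⁻¹(Φ(h) - ψ|ψ|/2)`, the RCBF condition renders the restricted safe set
`{H ≤ 0 and h ≤ 0}` forward invariant along the closed-loop trajectory. -/
theorem variable_authority_rcbf_forward_invariance
    (n m : ℕ)
    (f : ℝ × EuclideanSpace ℝ (Fin n) → EuclideanSpace ℝ (Fin n))
    (g : ℝ × EuclideanSpace ℝ (Fin n) →
      (EuclideanSpace ℝ (Fin m) →L[ℝ] EuclideanSpace ℝ (Fin n)))
    (wumax wxmax : ℝ) (hwumax : 0 ≤ wumax) (hwxmax : 0 ≤ wxmax)
    (h : ℝ × EuclideanSpace ℝ (Fin n) → ℝ)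
    (ht : ℝ × EuclideanSpace ℝ (Fin n) → ℝ)
    (hgrad : ℝ × EuclideanSpace ℝ (Fin n) → EuclideanSpace ℝ (Fin n))
    (hhsmooth : ContDiff ℝ 2 h)
    (hhderiv : ∀ p : ℝ × EuclideanSpace ℝ (Fin n),
      HasFDerivAt h
        (ht p • ContinuousLinearMap.fst ℝ ℝ (EuclideanSpace ℝ (Fin n)) +
          (innerSL ℝ (hgrad p)).comp
            (ContinuousLinearMap.snd ℝ ℝ (EuclideanSpace ℝ (Fin n)))) p)
    -- relative degree two: the gradient of h annihilates the range of g
    (hreldeg : ∀ (t : ℝ) (y : EuclideanSpace ℝ (Fin n)) (v : EuclideanSpace ℝ (Fin m)),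
      ⟪hgrad (t, y), g (t, y) v⟫ = 0)
    (ψ : ℝ × EuclideanSpace ℝ (Fin n) → ℝ)
    (hψdef : ∀ p : ℝ × EuclideanSpace ℝ (Fin n),
      ψ p = ht p + ⟪hgrad p, f p⟫ + wxmax * ‖hgrad p‖)
    (hψsmooth : ContDiff ℝ 1 ψ)
    (Φ : ℝ → ℝ) (hΦsmooth : ContDiff ℝ 1 Φ) (hΦbij : Function.Bijective Φ)
    (hφneg : ∀ l : ℝ, deriv Φ l < 0)
    (H : ℝ × EuclideanSpace ℝ (Fin n) → ℝ)
    (hHdef : ∀ p : ℝ × EuclideanSpace ℝ (Fin n),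
      H p = Function.invFun Φ (Φ (h p) - ψ p * |ψ p| / 2))
    (Ht : ℝ × EuclideanSpace ℝ (Fin n) → ℝ)
    (Hgrad : ℝ × EuclideanSpace ℝ (Fin n) → EuclideanSpace ℝ (Fin n))
    (hHderiv : ∀ p : ℝ × EuclideanSpace ℝ (Fin n),
      HasFDerivAt H
        (Ht p • ContinuousLinearMap.fst ℝ ℝ (EuclideanSpace ℝ (Fin n)) +
          (innerSL ℝ (Hgrad p)).comp
            (ContinuousLinearMap.snd ℝ ℝ (EuclideanSpace ℝ (Fin n)))) p)
    (t₀ t₁ : ℝ) (ht01 : t₀ ≤ t₁)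
    (u wu : ℝ → EuclideanSpace ℝ (Fin m)) (wx : ℝ → EuclideanSpace ℝ (Fin n))
    (hwub : ∀ t ∈ Set.Icc t₀ t₁, ‖wu t‖ ≤ wumax)
    (hwxb : ∀ t ∈ Set.Icc t₀ t₁, ‖wx t‖ ≤ wxmax)
    (x : ℝ → EuclideanSpace ℝ (Fin n))
    (hx : ∀ t ∈ Set.Icc t₀ t₁,
      HasDerivAt x (f (t, x t) + g (t, x t) (u t + wu t) + wx t) t)
    (α : ℝ → ℝ) (hα_lip : LocallyLipschitz α) (hα_mono : StrictMono α) (hα0 : α 0 = 0)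
    (hrcbf : ∀ t ∈ Set.Icc t₀ t₁,
      Ht (t, x t) + ⟪Hgrad (t, x t), f (t, x t) + g (t, x t) (u t)⟫ ≤
        α (-H (t, x t)) -
          (‖(g (t, x t)).adjoint (Hgrad (t, x t))‖ * wumax +
            ‖Hgrad (t, x t)‖ * wxmax))
    (hH0 : H (t₀, x t₀) ≤ 0) (hh0 : h (t₀, x t₀) ≤ 0) :
    ∀ t ∈ Set.Icc t₀ t₁, H (t, x t) ≤ 0 ∧ h (t, x t) ≤ 0 := by
  classical
  have hΦanti : StrictAnti Φ := strictAnti_of_deriv_neg hφneg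
  have hΦH : ∀ p : ℝ × EuclideanSpace ℝ (Fin n),
      Φ (H p) = Φ (h p) - ψ p * |ψ p| / 2 := by
    intro p
    rw [hHdef p]
    exact Function.rightInverse_invFun hΦbij.surjective _
  set x' : ℝ → EuclideanSpace ℝ (Fin n) :=
    fun t => f (t, x t) + g (t, x t) (u t + wu t) + wx t with hx'
  -- derivative of t ↦ H (t, x t)
  have hHd : ∀ t ∈ Set.Icc t₀ t₁,
      HasDerivAt (fun s => H (s, x s))
        (Ht (t, x t) + ⟪Hgrad (t, x t), x' t⟫) t := by
    intro t htm
    have hc : HasDerivAt (fun s => (s, x s)) ((1 : ℝ), x' t) t :=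
      (hasDerivAt_id t).prodMk (hx t htm)
    have := (hHderiv (t, x t)).comp_hasDerivAt t hc
    simp [ContinuousLinearMap.add_apply, ContinuousLinearMap.smul_apply] at this
    exact this
  have hhd : ∀ t ∈ Set.Icc t₀ t₁,
      HasDerivAt (fun s => h (s, x s))
        (ht (t, x t) + ⟪hgrad (t, x t), x' t⟫) t := by
    intro t htm
    have hc : HasDerivAt (fun s => (s, x s)) ((1 : ℝ), x' t) t :=
      (hasDerivAt_id t).prodMk (hx t htm)
    have := (hhderiv (t, x t)).comp_hasDerivAt t hc
    simp [ContinuousLinearMap.add_apply, ContinuousLinearMap.smul_apply] at this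
    exact this
  -- Step 1: H stays nonpositive
  have hHle : ∀ t ∈ Set.Icc t₀ t₁, H (t, x t) ≤ 0 := by
    apply nonpos_of_deriv_neg_on_pos t₀ t₁ (fun s => H (s, x s))
      (fun s => Ht (s, x s) + ⟪Hgrad (s, x s), x' s⟫) hHd _ hH0
    intro t htm hp
    have h1 : ⟪Hgrad (t, x t), g (t, x t) (wu t)⟫ ≤
        ‖(g (t, x t)).adjoint (Hgrad (t, x t))‖ * wumax := by
      rw [← ContinuousLinearMap.adjoint_inner_left]
      calc ⟪(g (t, x t)).adjoint (Hgrad (t, x t)), wu t⟫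
          ≤ ‖(g (t, x t)).adjoint (Hgrad (t, x t))‖ * ‖wu t‖ := real_inner_le_norm _ _
        _ ≤ ‖(g (t, x t)).adjoint (Hgrad (t, x t))‖ * wumax :=
            mul_le_mul_of_nonneg_left (hwub t htm) (norm_nonneg _)
    have h2 : ⟪Hgrad (t, x t), wx t⟫ ≤ ‖Hgrad (t, x t)‖ * wxmax :=
      le_trans (real_inner_le_norm _ _)
        (mul_le_mul_of_nonneg_left (hwxb t htm) (norm_nonneg _))
    have h3 := hrcbf t htm
    have h4 : α (-H (t, x t)) < 0 := by
      rw [← hα0]; exact hα_mono (by linarith)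
    have expand : ⟪Hgrad (t, x t), x' t⟫ =
        ⟪Hgrad (t, x t), f (t, x t) + g (t, x t) (u t)⟫ +
          ⟪Hgrad (t, x t), g (t, x t) (wu t)⟫ + ⟪Hgrad (t, x t), wx t⟫ := by
      simp [hx', map_add, inner_add_right]; ring
    linarith
  -- Step 2: h stays nonpositive
  have hhle : ∀ t ∈ Set.Icc t₀ t₁, h (t, x t) ≤ 0 := by
    apply nonpos_of_deriv_neg_on_pos t₀ t₁ (fun s => h (s, x s))
      (fun s => ht (s, x s) + ⟪hgrad (s, x s), x' s⟫) hhd _ hh0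
    intro t htm hp
    have e := hΦH (t, x t)
    have hΦ0H : Φ 0 ≤ Φ (H (t, x t)) := hΦanti.antitone (hHle t htm)
    have hΦh : Φ (h (t, x t)) < Φ 0 := hΦanti hp
    have hmul : ψ (t, x t) * |ψ (t, x t)| < 0 := by linarith
    have hψneg : ψ (t, x t) < 0 := by
      by_contra hge
      push_neg at hge
      nlinarith [abs_nonneg (ψ (t, x t))]
    have h2 : ⟪hgrad (t, x t), wx t⟫ ≤ wxmax * ‖hgrad (t, x t)‖ := by
      rw [mul_comm]
      exact le_trans (real_inner_le_norm _ _)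
        (mul_le_mul_of_nonneg_left (hwxb t htm) (norm_nonneg _))
    have expand : ⟪hgrad (t, x t), x' t⟫ =
        ⟪hgrad (t, x t), f (t, x t)⟫ + ⟪hgrad (t, x t), g (t, x t) (u t + wu t)⟫ +
          ⟪hgrad (t, x t), wx t⟫ := by
      simp [hx', inner_add_right]
    have hzero : ⟪hgrad (t, x t), g (t, x t) (u t + wu t)⟫ = 0 := hreldeg t (x t) _
    have hψd := hψdef (t, x t)
    linarith
  exact fun t htm => ⟨hHle t htm, hhle t htm⟩
end

section
/- Let E = EuclideanSpace ℝ (Fin n), let Y : ℝ × ℝ × E → E be continuous, and let χ : ℝ × ℝ × E → E be continuously differentiable and satisfy: χ(0, t, x) = x for all (t, x), the partial derivative of χ in its first argument at (0, t, x) equals Y(0, t, x), and the cocycle identity χ(β, t, x) = χ(β - τ, t + τ, χ(τ, t, x)) for all 0 ≤ τ ≤ β and all (t, x). Then for every β ≥ 0 and every (t, x): ∂χ/∂β (β, t, x) = ∂χ/∂t₀ (β, t, x) + ( ∂χ/∂x₀ (β, t, x) ) ( Y(0, t, x) ), where ∂χ/∂β ∈ E, ∂χ/∂t₀ ∈ E,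 and ∂χ/∂x₀ ∈ E →L[ℝ] E denote the partial derivatives of χ(β, t₀, x₀) with respect to its three arguments. -/
/-- Differentiating the cocycle identity of the flow `χ(β, t₀, x₀)` at `τ = 0`
yields `∂χ/∂β = ∂χ/∂t₀ + (∂χ/∂x₀)(Y(0, t, x))`. -/
theorem flow_partial_beta_eq_partial_t0_add_partial_x0
    (n : ℕ)
    (Y : ℝ × ℝ × EuclideanSpace ℝ (Fin n) → EuclideanSpace ℝ (Fin n))
    (hYcont : Continuous Y)
    (χ : ℝ × ℝ × EuclideanSpace ℝ (Fin n) → EuclideanSpace ℝ (Fin n))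
    (hχsmooth : ContDiff ℝ 1 χ)
    (hχ0 : ∀ (t : ℝ) (x : EuclideanSpace ℝ (Fin n)), χ (0, t, x) = x)
    (hχβ0 : ∀ (t : ℝ) (x : EuclideanSpace ℝ (Fin n)),
      deriv (fun b => χ (b, t, x)) 0 = Y (0, t, x))
    (hcocycle : ∀ (τ β t : ℝ) (x : EuclideanSpace ℝ (Fin n)), 0 ≤ τ → τ ≤ β →
      χ (β, t, x) = χ (β - τ, t + τ, χ (τ, t, x))) :
    ∀ (β : ℝ), 0 ≤ β → ∀ (t : ℝ) (x : EuclideanSpace ℝ (Fin n)),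
      deriv (fun b => χ (b, t, x)) β =
        deriv (fun s => χ (β, s, x)) t +
          (fderiv ℝ (fun y => χ (β, t, y)) x) (Y (0, t, x)) := by
  intro β hβ t x
  have hdiff : Differentiable ℝ χ := hχsmooth.differentiable one_ne_zero
  -- derivative in first variable at any point
  have hbgen : ∀ (b t : ℝ) (x : EuclideanSpace ℝ (Fin n)), HasDerivAt (fun b => χ (b, t, x))
      (fderiv ℝ χ (b, t, x) (1, 0, 0)) b := by
    intro b t x
    have hin : HasDerivAt (fun b : ℝ => ((b : ℝ), t, x)) ((1 : ℝ), (0 : ℝ), (0 : EuclideanSpace ℝ (Fin n))) b :=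
      HasDerivAt.prodMk (hasDerivAt_id b) (HasDerivAt.prodMk (hasDerivAt_const b t) (hasDerivAt_const b x))
    exact (hdiff (b, t, x)).hasFDerivAt.comp_hasDerivAt b hin
  rcases eq_or_lt_of_le hβ with rfl | hβpos
  · -- β = 0 case
    have h1 : (fun s => χ (0, s, x)) = fun _ => x := funext fun s => hχ0 s x
    have h2 : (fun y : EuclideanSpace ℝ (Fin n) => χ (0, t, y)) = id := funext fun y => hχ0 t y
    rw [hχβ0, h1, h2, deriv_const, fderiv_id]
    simp
  · set D : ℝ × ℝ × EuclideanSpace ℝ (Fin n) →L[ℝ] EuclideanSpace ℝ (Fin n) := fderiv ℝ χ (β, t, x) with hD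
    have hD' : HasFDerivAt χ D (β, t, x) := (hdiff (β, t, x)).hasFDerivAt
    have hb : HasDerivAt (fun b => χ (b, t, x)) (D (1, 0, 0)) β := hbgen β t x
    have ht : HasDerivAt (fun s => χ (β, s, x)) (D (0, 1, 0)) t := by
      have hin : HasDerivAt (fun s : ℝ => ((β : ℝ), s, x)) ((0 : ℝ), (1 : ℝ), (0 : EuclideanSpace ℝ (Fin n))) t :=
        HasDerivAt.prodMk (hasDerivAt_const t β) (HasDerivAt.prodMk (hasDerivAt_id t) (hasDerivAt_const t x))
      exact hD'.comp_hasDerivAt t hin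
    set L : EuclideanSpace ℝ (Fin n) →L[ℝ] ℝ × ℝ × EuclideanSpace ℝ (Fin n) :=
      (0 : EuclideanSpace ℝ (Fin n) →L[ℝ] ℝ).prod ((0 : EuclideanSpace ℝ (Fin n) →L[ℝ] ℝ).prod (ContinuousLinearMap.id ℝ (EuclideanSpace ℝ (Fin n)))) with hL
    have hx : HasFDerivAt (fun y : EuclideanSpace ℝ (Fin n) => χ (β, t, y)) (D.comp L) x := by
      have hin : HasFDerivAt (fun y : EuclideanSpace ℝ (Fin n) => ((β : ℝ), (t : ℝ), y)) L x :=
        HasFDerivAt.prodMk (hasFDerivAt_const β x) (HasFDerivAt.prodMk (hasFDerivAt_const t x) (hasFDerivAt_id x))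
      exact hD'.comp x hin
    -- velocity of τ ↦ χ (τ, t, x) at 0
    have hYd : HasDerivAt (fun τ => χ (τ, t, x)) (Y (0, t, x)) 0 := by
      have h := hbgen 0 t x
      have : fderiv ℝ χ (0, t, x) (1, 0, 0) = Y (0, t, x) :=
        h.deriv.symm.trans (hχβ0 t x)
      exact this ▸ h
    -- the composed curve F
    have hG : HasDerivAt (fun τ : ℝ => (β - τ, t + τ, χ (τ, t, x)))
        ((-1 : ℝ), (1 : ℝ), Y (0, t, x)) 0 := by
      have h1 : HasDerivAt (fun τ : ℝ => β - τ) (-1 : ℝ) 0 := by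
        simpa using (hasDerivAt_id (0 : ℝ)).const_sub β
      have h2 : HasDerivAt (fun τ : ℝ => t + τ) (1 : ℝ) 0 := by
        simpa using (hasDerivAt_id (0 : ℝ)).const_add t
      exact HasDerivAt.prodMk h1 (HasDerivAt.prodMk h2 hYd)
    have hF : HasDerivAt (fun τ : ℝ => χ (β - τ, t + τ, χ (τ, t, x)))
        (D (-1, 1, Y (0, t, x))) 0 := by
      have hGeq : ((β - (0 : ℝ), t + (0 : ℝ), χ ((0 : ℝ), t, x))) = ((β : ℝ), t, x) := by
        simp [hχ0]
      have hD'' : HasFDerivAt χ D (β - (0 : ℝ), t + (0 : ℝ), χ ((0 : ℝ), t, x)) := by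
        rw [hGeq]; exact hD'
      exact hD''.comp_hasDerivAt 0 hG
    -- F is constant on [0, β]
    have hFc : HasDerivWithinAt (fun τ : ℝ => χ (β - τ, t + τ, χ (τ, t, x)))
        0 (Set.Icc 0 β) 0 := by
      have hc : HasDerivWithinAt (fun _ : ℝ => χ (β, t, x)) 0 (Set.Icc 0 β) 0 :=
        (hasDerivWithinAt_const 0 _ _)
      refine hc.congr (fun τ hτ => ?_) ?_
      · exact (hcocycle τ β t x hτ.1 hτ.2).symm
      · exact (hcocycle 0 β t x le_rfl hβ).symm
    have hu : UniqueDiffWithinAt ℝ (Set.Icc (0 : ℝ) β) 0 :=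
      (uniqueDiffOn_Icc hβpos) 0 (Set.left_mem_Icc.mpr hβ)
    have hzero : D (-1, 1, Y (0, t, x)) = 0 :=
      ((hF.hasDerivWithinAt.derivWithin hu).symm).trans (hFc.derivWithin hu)
    rw [hb.deriv, ht.deriv, hx.fderiv]
    have hLY : L (Y (0, t, x)) = ((0 : ℝ), (0 : ℝ), Y (0, t, x)) := by
      simp [hL]
    rw [ContinuousLinearMap.comp_apply, hLY]
    calc D ((1 : ℝ), (0 : ℝ), (0 : EuclideanSpace ℝ (Fin n)))
        = D ((1, 0, 0) + (-1, 1, Y (0, t, x))) := by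
          rw [map_add, hzero, add_zero]
      _ = D (0, 1, Y (0, t, x)) := by norm_num [Prod.mk_add_mk]
      _ = D ((0, 1, 0) + (0, 0, Y (0, t, x))) := by norm_num [Prod.mk_add_mk]
      _ = D (0, 1, 0) + D (0, 0, Y (0, t, x)) := map_add D _ _
end

section
/- Let r, r_c, v, v_c ∈ EuclideanSpace ℝ (Fin 3) with r ≠ r_c, let μ > 0, u_max > 0, and w_{u,max} ≥ 0, and define f_μ = -μ (r - r_c) / ‖r - r_c‖³. Then there exists u ∈ EuclideanSpace ℝ (Fin 3) with ‖u‖_∞ ≤ u_max (infinity norm, i.e. each coordinate bounded by u_max in absolute value) such that for every w_u ∈ EuclideanSpace ℝ (Fin 3) with ‖w_u‖ ≤ w_{u,max} (Euclidean norm): - ⟪r - r_c, f_μ + u + w_u⟫ / ‖r - r_c‖ - ‖(r - r_c) × (v - v_c)‖² / ‖r - r_c‖³ ≤ μ / ‖r - r_c‖² - u_max + w_{u,max}, where × denotes the cross product on ℝ³ and ⟪·,·⟫ the Euclidean inner product. -/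
open scoped RealInnerProductSpace

lemma abs_apply_le_norm (x : EuclideanSpace ℝ (Fin 3)) (i : Fin 3) : |x i| ≤ ‖x‖ := by
  have h : x i = ⟪EuclideanSpace.single i (1:ℝ), x⟫ := by
    simp [EuclideanSpace.inner_single_left]
  calc |x i| = |⟪EuclideanSpace.single i (1:ℝ), x⟫| := by rw [h]
    _ ≤ ‖EuclideanSpace.single i (1:ℝ)‖ * ‖x‖ := abs_real_inner_le_norm _ _
    _ = ‖x‖ := by simp [EuclideanSpace.norm_single]

/-- Under the box input constraint `‖u‖_∞ ≤ u_max`, the worst-case robust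
second derivative of the spherical avoidance constraint along spacecraft
dynamics with central gravity `f_μ = -μ(r - r_c)/‖r - r_c‖³` is at most
`μ/‖r - r_c‖² - u_max + w_{u,max}`. -/
theorem spacecraft_hddot_bound
    (r r_c v v_c : EuclideanSpace ℝ (Fin 3)) (hne : r ≠ r_c)
    (μ u_max wumax : ℝ) (hμ : 0 < μ) (hu : 0 < u_max) (hwu : 0 ≤ wumax) :
    ∃ u : EuclideanSpace ℝ (Fin 3), (∀ i : Fin 3, |u i| ≤ u_max) ∧
      ∀ w_u : EuclideanSpace ℝ (Fin 3), ‖w_u‖ ≤ wumax →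
        -⟪r - r_c, (-(μ / ‖r - r_c‖ ^ 3)) • (r - r_c) + u + w_u⟫ / ‖r - r_c‖ -
            ‖(WithLp.equiv 2 (Fin 3 → ℝ)).symm
                (crossProduct (WithLp.equiv 2 (Fin 3 → ℝ) (r - r_c))
                  (WithLp.equiv 2 (Fin 3 → ℝ) (v - v_c)))‖ ^ 2 / ‖r - r_c‖ ^ 3 ≤
          μ / ‖r - r_c‖ ^ 2 - u_max + wumax := by
  set d := r - r_c with hd
  have hdne : d ≠ 0 := sub_ne_zero.mpr hne
  have hnd : 0 < ‖d‖ := norm_pos_iff.mpr hdne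
  refine ⟨(u_max / ‖d‖) • d, ?_, ?_⟩
  · intro i
    have h1 : |((u_max / ‖d‖) • d) i| = (u_max / ‖d‖) * |d i| := by
      simp [PiLp.smul_apply, abs_mul, abs_of_pos (div_pos hu hnd)]
    rw [h1]
    calc (u_max / ‖d‖) * |d i| ≤ (u_max / ‖d‖) * ‖d‖ :=
          mul_le_mul_of_nonneg_left (abs_apply_le_norm d i) (le_of_lt (div_pos hu hnd))
      _ = u_max := by field_simp
  · intro w hw
    have hcross : 0 ≤ ‖(WithLp.equiv 2 (Fin 3 → ℝ)).symm
        (crossProduct (WithLp.equiv 2 (Fin 3 → ℝ) d)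
          (WithLp.equiv 2 (Fin 3 → ℝ) (v - v_c)))‖ ^ 2 / ‖d‖ ^ 3 := by positivity
    have hinner : ⟪d, (-(μ / ‖d‖ ^ 3)) • d + (u_max / ‖d‖) • d + w⟫ =
        (-(μ / ‖d‖ ^ 3)) * ‖d‖ ^ 2 + (u_max / ‖d‖) * ‖d‖ ^ 2 + ⟪d, w⟫ := by
      rw [inner_add_right, inner_add_right, real_inner_smul_right, real_inner_smul_right,
        real_inner_self_eq_norm_sq]
    have hcs : -⟪d, w⟫ ≤ ‖d‖ * wumax := by
      have h1 := abs_real_inner_le_norm d w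
      have h2 : ‖d‖ * ‖w‖ ≤ ‖d‖ * wumax := mul_le_mul_of_nonneg_left hw (norm_nonneg d)
      have h3 := neg_abs_le (⟪d, w⟫)
      linarith
    have key : -⟪d, (-(μ / ‖d‖ ^ 3)) • d + (u_max / ‖d‖) • d + w⟫ / ‖d‖ ≤
        μ / ‖d‖ ^ 2 - u_max + wumax := by
      rw [hinner, div_le_iff₀ hnd]
      have h3 : (μ / ‖d‖ ^ 3) * ‖d‖ ^ 2 * ‖d‖ = μ := by
        field_simp
      have h4 : (u_max / ‖d‖) * ‖d‖ ^ 2 = u_max * ‖d‖ := by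
        field_simp
      have h5 : μ / ‖d‖ ^ 2 * ‖d‖ ^ 2 = μ := by field_simp
      nlinarith [hcs, sq_nonneg ‖d‖]
    linarith [key, hcross]
end
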